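/- arXiv:2506.11349 — 5 statements merged into one kernel-verified Lean document; each statement's English description precedes it below -/
import Mathlib

section
/- Let q be an odd prime power and let i be any nonnegative integer. Then the polynomial x^2 + α^i x + 1 is irreducible over F_q if and only if (i mod (q-1)/2) ∈ I_0, where (i mod (q-1)/2) denotes the remainder of i upon division by (q-1)/2. -/
open Polynomial

/-- For `q` odd: `R₀ = {(i mod (q-1)/2) : α^i = α^k + α^(q-1-k) for some 0 ≤ k < ⌈(q-1)/4⌉}`
(note `⌈(q-1)/4⌉ = (q+2)/4` in natural-number division for odd `q`). -/
def R0set (q : ℕ) {F : Type} [Field F] (α : F) : Set ℕ :=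
  {r | ∃ i k : ℕ, i < q - 1 ∧ k < (q + 2) / 4 ∧
    α ^ i = α ^ k + α ^ (q - 1 - k) ∧ r = i % ((q - 1) / 2)}

/-- For `q` odd: `I₀ = {0,1,...,(q-1)/2 - 1} \ R₀`. -/
def I0set (q : ℕ) {F : Type} [Field F] (α : F) : Set ℕ :=
  {r | r < (q - 1) / 2} \ R0set q α

theorem stmt_3 (q : ℕ) (F : Type) [Field F] [Fintype F] (hF : Fintype.card F = q)
    (hq : Odd q) (α : Fˣ) (hα : ∀ x : Fˣ, x ∈ Subgroup.zpowers α) (i : ℕ) :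
    Irreducible (X ^ 2 + C ((α : F) ^ i) * X + C 1 : F[X]) ↔
      i % ((q - 1) / 2) ∈ I0set q (α : F) := by
  classical
  set a : F := (α : F) with ha
  have hq2 : q % 2 = 1 := Nat.odd_iff.mp hq
  have hq3 : 3 ≤ q := by
    have : 1 < Fintype.card F := Fintype.one_lt_card
    omega
  set m : ℕ := (q - 1) / 2 with hmdef
  have hm : q - 1 = 2 * m := by omega
  have hm0 : 0 < m := by omega
  clear_value m
  have hord : orderOf α = q - 1 := by
    rw [orderOf_eq_card_of_forall_mem_zpowers hα, Nat.card_eq_fintype_card,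
      Fintype.card_units, hF]
  have ha0 : a ≠ 0 := Units.ne_zero α
  have haq : a ^ (q - 1) = 1 := by
    rw [ha, ← Units.val_pow_eq_pow_val, ← hord, pow_orderOf_eq_one, Units.val_one]
  have ham : a ^ m = -1 := by
    have hsq : a ^ m * a ^ m = 1 := by
      rw [← pow_add, show m + m = q - 1 by omega]; exact haq
    rcases mul_self_eq_one_iff.mp hsq with h1 | h1
    · exfalso
      have hu : α ^ m = 1 := Units.ext (by simpa using h1)
      have := orderOf_dvd_of_pow_eq_one hu
      rw [hord] at this
      have := Nat.le_of_dvd hm0 this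
      omega
    · exact h1
  -- reduction of exponents mod q-1
  have hred : ∀ n : ℕ, a ^ (n % (q - 1)) = a ^ n := by
    intro n
    have := pow_mod_orderOf α n
    rw [hord] at this
    calc a ^ (n % (q-1)) = ((α ^ (n % (q-1)) : Fˣ) : F) := by
          rw [Units.val_pow_eq_pow_val]
      _ = ((α ^ n : Fˣ) : F) := by rw [this]
      _ = a ^ n := by rw [Units.val_pow_eq_pow_val]
  -- inverse formula
  have hinv : ∀ j : ℕ, j ≤ q - 1 → a ^ (q - 1 - j) * a ^ j = 1 := by
    intro j hj
    rw [← pow_add, show q - 1 - j + j = q - 1 by omega]; exact haq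
  -- a^(m-k) = -a^(q-1-k) for k ≤ m
  have hvm : ∀ k : ℕ, k ≤ m → a ^ (m - k) = -a ^ (q - 1 - k) := by
    intro k hk
    have hk' : a ^ k ≠ 0 := pow_ne_zero _ ha0
    apply mul_right_cancel₀ hk'
    rw [← pow_add, show m - k + k = m by omega, ham, neg_mul, hinv k (by omega)]
  -- sign lemma
  have hsign : ∀ s t : ℕ, s % m = t % m → a ^ s = a ^ t ∨ a ^ s = -a ^ t := by
    have hdec : ∀ s : ℕ, a ^ s = (-1 : F) ^ (s / m) * a ^ (s % m) := by
      intro s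
      conv_lhs => rw [show s = m * (s / m) + s % m from (Nat.div_add_mod s m).symm]
      rw [pow_add, pow_mul, ham]
    intro s t hst
    rw [hdec s, hdec t, hst]
    rcases neg_one_pow_eq_or F (s / m) with h1 | h1 <;>
      rcases neg_one_pow_eq_or F (t / m) with h2 | h2 <;>
      rw [h1, h2] <;> ring_nf <;> simp
  -- root characterization
  have key : (∃ x : F, x ^ 2 + a ^ i * x + 1 = 0) ↔
      ∃ j, j < q - 1 ∧ a ^ i = a ^ j + a ^ (q - 1 - j) := by
    constructor
    · rintro ⟨x, hx⟩
      have hx0 : x ≠ 0 := by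
        rintro rfl; simp at hx
      set u : Fˣ := Units.mk0 (-x) (neg_ne_zero.mpr hx0) with hu
      obtain ⟨n, hn⟩ := mem_powers_iff_mem_zpowers.mpr (hα u)
      replace hn : α ^ n = u := hn
      refine ⟨n % (q - 1), Nat.mod_lt _ (by omega), ?_⟩
      have hun : a ^ (n % (q - 1)) = -x := by
        rw [hred, ha, ← Units.val_pow_eq_pow_val, hn, hu, Units.val_mk0]
      have hinvu : a ^ (q - 1 - n % (q - 1)) = -x⁻¹ := by
        have h1 := hinv (n % (q - 1)) (le_of_lt (Nat.mod_lt _ (by omega : 0 < q - 1)))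
        rw [hun] at h1
        apply mul_right_cancel₀ hx0
        rw [neg_mul, inv_mul_cancel₀ hx0]
        linear_combination -h1
      rw [hun, hinvu]
      apply mul_right_cancel₀ hx0
      rw [add_mul, neg_mul, neg_mul, inv_mul_cancel₀ hx0]
      linear_combination hx
    · rintro ⟨j, hj, hij⟩
      refine ⟨-a ^ j, ?_⟩
      have h1 := hinv j (le_of_lt hj)
      linear_combination (-(a ^ j)) * hij - h1
  -- main combinatorial equivalence
  have main : (∃ j, j < q - 1 ∧ a ^ i = a ^ j + a ^ (q - 1 - j)) ↔ i % m ∈ R0set q a := by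
    clear key
    constructor
    · rintro ⟨j, hj, hij⟩
      obtain ⟨j0, hj0m, hij0⟩ : ∃ j0, j0 ≤ m ∧ a ^ i = a ^ j0 + a ^ (q - 1 - j0) := by
        rcases Nat.le_total j (q - 1 - j) with h | h
        · exact ⟨j, by omega, hij⟩
        · exact ⟨q - 1 - j, by omega,
            by rw [show q - 1 - (q - 1 - j) = j by omega, add_comm]; exact hij⟩
      by_cases hB : j0 < (q + 2) / 4
      · have h1 : i % (q - 1) < q - 1 := Nat.mod_lt _ (by omega)
        have h2 : a ^ (i % (q - 1)) = a ^ j0 + a ^ (q - 1 - j0) := by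
          rw [hred]; exact hij0
        have h3 : i % m = i % (q - 1) % ((q - 1) / 2) := by
          have hdvd : m ∣ q - 1 := ⟨2, by omega⟩
          rw [← hmdef, Nat.mod_mod_of_dvd i hdvd]
        exact ⟨i % (q - 1), j0, h1, hB, h2, h3⟩
      · push_neg at hB
        have hne : 2 * j0 ≠ m := by
          intro hcon
          have e1 : q - 1 - j0 = m + j0 := by omega
          have : a ^ (q - 1 - j0) = -a ^ j0 := by
            rw [e1, pow_add, ham, neg_one_mul]
          rw [this, add_neg_cancel] at hij0
          exact pow_ne_zero i ha0 hij0
        obtain ⟨k, hk⟩ : ∃ k, k = m - j0 := ⟨_, rfl⟩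
        have hkB : k < (q + 2) / 4 := by omega
        have hkm : k ≤ m := by omega
        have h1 : (i + m) % (q - 1) < q - 1 := Nat.mod_lt _ (by omega)
        have e1 : j0 = m - k := by omega
        have e2 : q - 1 - (m - k) = m + k := by omega
        have h2 : a ^ ((i + m) % (q - 1)) = a ^ k + a ^ (q - 1 - k) := by
          rw [hred, pow_add, ham, mul_neg_one, hij0, e1, e2,
            hvm k hkm, pow_add, ham, neg_one_mul]
          ring
        have h3 : i % m = (i + m) % (q - 1) % ((q - 1) / 2) := by
          have hdvd : m ∣ q - 1 := ⟨2, by omega⟩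
          rw [← hmdef, Nat.mod_mod_of_dvd _ hdvd, Nat.add_mod_right]
        exact ⟨(i + m) % (q - 1), k, h1, hkB, h2, h3⟩
    · rintro ⟨i', k, hi', hkB, hik, hr⟩
      rw [← hmdef] at hr
      rcases hsign i i' hr with h | h
      · exact ⟨k, by omega, by rw [h]; exact hik⟩
      · have e1 : q - 1 - (m + k) = m - k := by omega
        have e2 : k ≤ m := by omega
        have e3 : m + k < q - 1 := by omega
        refine ⟨m + k, e3, ?_⟩
        rw [h, hik, e1, hvm k e2, pow_add, ham, neg_one_mul]
        ring
  -- degree facts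
  set p : F[X] := X ^ 2 + C (a ^ i) * X + C 1 with hp
  have hdeg : p.natDegree = 2 := by
    rw [hp]; compute_degree!
  have hp0 : p ≠ 0 := by
    intro h; rw [h] at hdeg; simp at hdeg
  have heval : ∀ x : F, p.eval x = x ^ 2 + a ^ i * x + 1 := by
    intro x; simp [hp]
  rw [irreducible_iff_roots_eq_zero_of_degree_le_three
    (by clear key main; omega) (by clear key main; omega)]
  rw [Multiset.eq_zero_iff_forall_notMem]
  constructor
  · intro h
    refine ⟨show i % m < (q - 1) / 2 by rw [← hmdef]; exact Nat.mod_lt i hm0,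
      fun hr => ?_⟩
    obtain ⟨j, hj, hij⟩ := main.mpr hr
    obtain ⟨x, hx⟩ := key.mpr ⟨j, hj, hij⟩
    exact h x ((mem_roots hp0).mpr (by rw [IsRoot.def, heval]; exact hx))
  · rintro ⟨hlt, hr⟩ x hx
    rw [mem_roots hp0] at hx
    exact hr (main.mp (key.mp ⟨x, by rw [← heval x]; exact hx⟩))
end

section
/- Let q be an odd prime power and let i be any nonnegative integer. Then the polynomial x^2 + α^i x + α is irreducible over F_q if and only if (i mod (q-1)/2) ∈ I_1, where (i mod (q-1)/2) denotes the remainder of i upon division by (q-1)/2. -/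
open Polynomial

/-- For `q` odd: `R₁ = {(i mod (q-1)/2) : α^i = α^(k+1) + α^(q-1-k) for some 0 ≤ k < ⌊(q-1)/4⌋}`. -/
def R1set (q : ℕ) {F : Type} [Field F] (α : F) : Set ℕ :=
  {r | ∃ i k : ℕ, i < q - 1 ∧ k < (q - 1) / 4 ∧
    α ^ i = α ^ (k + 1) + α ^ (q - 1 - k) ∧ r = i % ((q - 1) / 2)}

/-- For `q` odd: `I₁ = {0,1,...,(q-1)/2 - 1} \ R₁`. -/
def I1set (q : ℕ) {F : Type} [Field F] (α : F) : Set ℕ :=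
  {r | r < (q - 1) / 2} \ R1set q α

theorem stmt_4 (q : ℕ) (F : Type) [Field F] [Fintype F] (hF : Fintype.card F = q)
    (hq : Odd q) (α : Fˣ) (hα : ∀ x : Fˣ, x ∈ Subgroup.zpowers α) (i : ℕ) :
    Irreducible (X ^ 2 + C ((α : F) ^ i) * X + C (α : F) : F[X]) ↔
      i % ((q - 1) / 2) ∈ I1set q (α : F) := by
  classical
  have hq2 : 2 ≤ q := by rw [← hF]; exact Fintype.one_lt_card
  obtain ⟨m0, hm0⟩ := hq
  set m : ℕ := (q - 1) / 2 with hmdef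
  have hm1 : 1 ≤ m := by omega
  have e2 : q - 1 = 2 * m := by omega
  set a : F := (α : F) with hadef
  have ha0 : a ≠ 0 := α.ne_zero
  have horda : orderOf a = 2 * m := by
    rw [hadef, orderOf_units, orderOf_eq_card_of_forall_mem_zpowers hα,
      Nat.card_eq_fintype_card, Fintype.card_units, hF, e2]
  have hordα : orderOf α = 2 * m := by
    rw [orderOf_eq_card_of_forall_mem_zpowers hα, Nat.card_eq_fintype_card,
      Fintype.card_units, hF, e2]
  have hpow1 : a ^ (2 * m) = 1 := by rw [← horda]; exact pow_orderOf_eq_one a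
  have hmodpow : ∀ x : ℕ, a ^ (x % (2*m)) = a ^ x := by
    intro x
    conv_rhs => rw [← Nat.div_add_mod x (2*m)]
    rw [pow_add, pow_mul, hpow1, one_pow, one_mul]
  have ham : a ^ m = -1 := by
    have h2 : (a ^ m) ^ 2 = 1 := by rw [← pow_mul, mul_comm]; exact hpow1
    have hne : a ^ m ≠ 1 := by
      intro h
      have hd := orderOf_dvd_of_pow_eq_one h
      rw [horda] at hd
      have := Nat.le_of_dvd (by omega) hd
      omega
    have h3 : (a ^ m - 1) * (a ^ m + 1) = 0 := by linear_combination h2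
    rcases mul_eq_zero.mp h3 with h | h
    · exact absurd (sub_eq_zero.mp h) hne
    · exact eq_neg_of_add_eq_zero_left h
  have hstep : ∀ u d : ℕ, a ^ (u + m * d) = a ^ u * (-1 : F) ^ d := by
    intro u d; rw [pow_add, pow_mul, ham]
  have hsign : ∀ x u : ℕ, x % m = u % m → a ^ x = a ^ u ∨ a ^ x = -a ^ u := by
    intro x u hxu
    rcases le_total u x with h | h
    · obtain ⟨d, hd⟩ := (Nat.modEq_iff_dvd' h).mp (Nat.ModEq.symm hxu)
      have hx : x = u + m * d := by omega
      rcases Nat.even_or_odd d with he | ho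
      · left; rw [hx, hstep, he.neg_one_pow, mul_one]
      · right; rw [hx, hstep, ho.neg_one_pow, mul_neg_one]
    · obtain ⟨d, hd⟩ := (Nat.modEq_iff_dvd' h).mp hxu
      have hu : u = x + m * d := by omega
      rcases Nat.even_or_odd d with he | ho
      · left; rw [hu, hstep, he.neg_one_pow, mul_one]
      · right; rw [hu, hstep, ho.neg_one_pow, mul_neg_one]; ring
  have hpair : ∀ x y u v : ℕ, x + y = u + v → x % m = u % m →
      a ^ x + a ^ y = a ^ u + a ^ v ∨ a ^ x + a ^ y = -(a ^ u + a ^ v) := by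
    intro x y u v hs hxu
    rcases le_total u x with h | h
    · obtain ⟨d, hd⟩ := (Nat.modEq_iff_dvd' h).mp (Nat.ModEq.symm hxu)
      have hx : x = u + m * d := by omega
      have hv : v = y + m * d := by omega
      rcases Nat.even_or_odd d with he | ho
      · left; rw [hx, hv, hstep, hstep, he.neg_one_pow]; ring
      · right; rw [hx, hv, hstep, hstep, ho.neg_one_pow]; ring
    · obtain ⟨d, hd⟩ := (Nat.modEq_iff_dvd' h).mp hxu
      have hu : u = x + m * d := by omega
      have hy : y = v + m * d := by omega
      rcases Nat.even_or_odd d with he | ho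
      · left; rw [hu, hy, hstep, hstep, he.neg_one_pow]; ring
      · right; rw [hu, hy, hstep, hstep, ho.neg_one_pow]; ring
  set p : F[X] := X ^ 2 + C (a ^ i) * X + C a with hp
  have hmonic : p.Monic := by rw [hp]; monicity!
  have hdeg : p.natDegree = 2 := by rw [hp]; compute_degree!
  have hc0 : p.coeff 0 = a := by
    simp [hp, coeff_add, coeff_X_pow, coeff_C_mul, coeff_X, coeff_C]
  have hc1 : p.coeff 1 = a ^ i := by
    rw [hp, coeff_add, coeff_add, coeff_X_pow, coeff_C_mul, coeff_X_one, coeff_C]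
    norm_num
  have hcrit := hmonic.not_irreducible_iff_exists_add_mul_eq_coeff hdeg
  rw [hc0, hc1] at hcrit
  have hmem : (i % m ∈ I1set q a) ↔ ¬ (i % m ∈ R1set q a) := by
    simp only [I1set, Set.mem_diff, Set.mem_setOf_eq]
    exact and_iff_right (by rw [← hmdef]; exact Nat.mod_lt i (by omega))
  rw [hmem, iff_not_comm, hcrit]
  simp only [R1set, Set.mem_setOf_eq]
  rw [← hmdef]
  constructor
  · rintro ⟨i', k, hi', hk, hsum, hr⟩
    rw [show q - 1 - k = 2*m - k by omega] at hsum
    have hprod : a = a ^ (k+1) * a ^ (2*m - k) := by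
      rw [← pow_add, show k + 1 + (2*m - k) = 2*m + 1 by omega, pow_succ, hpow1, one_mul]
    rcases hsign i i' hr with h | h
    · exact ⟨a^(k+1), a^(2*m-k), hprod, by rw [h, hsum]⟩
    · refine ⟨-a^(k+1), -a^(2*m-k), by rw [neg_mul_neg]; exact hprod, ?_⟩
      rw [h, hsum]; ring
  · rintro ⟨c₁, c₂, hprod, hsum⟩
    have hc₁0 : c₁ ≠ 0 := by rintro rfl; rw [zero_mul] at hprod; exact ha0 hprod
    obtain ⟨z, hz⟩ := Subgroup.mem_zpowers_iff.mp (hα (Units.mk0 c₁ hc₁0))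
    set j : ℕ := (z % ((2*m : ℕ) : ℤ)).toNat with hjdef
    have hjz : (j : ℤ) = z % ((2*m : ℕ) : ℤ) :=
      Int.toNat_of_nonneg (Int.emod_nonneg z (by exact_mod_cast (by omega : (2*m : ℕ) ≠ 0)))
    have hj2 : j < 2*m := by
      have h1 : z % ((2*m : ℕ) : ℤ) < ((2*m : ℕ) : ℤ) :=
        Int.emod_lt_of_pos z (by exact_mod_cast (by omega : 0 < 2*m))
      omega
    have hαj : α ^ j = Units.mk0 c₁ hc₁0 := by
      rw [← hz, ← zpow_natCast, zpow_eq_zpow_iff_modEq, hordα]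
      show (j : ℤ) ≡ z [ZMOD ((2*m : ℕ) : ℤ)]
      rw [Int.ModEq, hjz]
      exact Int.emod_emod_of_dvd z dvd_rfl
    have hcj : c₁ = a ^ j := by
      have h1 := congrArg (Units.val) hαj
      simp only [Units.val_pow_eq_pow_val, Units.val_mk0] at h1
      exact h1.symm
    have hc2 : c₂ = a ^ (2*m + 1 - j) := by
      have he : a ^ j * a ^ (2*m+1-j) = a := by
        rw [← pow_add, show j + (2*m+1-j) = 2*m+1 by omega, pow_succ, hpow1, one_mul]
      apply mul_left_cancel₀ (pow_ne_zero j ha0)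
      rw [he, ← hcj]
      exact hprod.symm
    set b : ℕ := (j + m - 1) % m with hbdef
    have hb : b < m := Nat.mod_lt _ (by omega)
    have hbj : (b+1) % m = j % m := by
      have h1 : b ≡ j + m - 1 [MOD m] := Nat.mod_modEq _ m
      have h2 := h1.add_right 1
      rw [Nat.sub_add_cancel (by omega)] at h2
      exact h2.trans (Nat.add_mod_right j m)
    set c : ℕ := m - 1 - b with hcdef
    have hcc : (c+1) % m = (2*m+1-j) % m := by
      have hsum1 : (c+1) + (b+1) ≡ (2*m+1-j) + j [MOD m] := by
        rw [show (c+1)+(b+1) = m+1 by omega, show (2*m+1-j)+j = 2*m+1 by omega]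
        exact (Nat.modEq_iff_dvd' (by omega)).mpr ⟨1, by omega⟩
      exact Nat.ModEq.add_right_cancel hbj hsum1
    have hbsum : a ^ j + a ^ (2*m+1-j) = a ^ i := by rw [← hcj, ← hc2]; exact hsum.symm
    have hswap : a ^ (2*m+1-j) + a ^ j = a ^ i := by
      rw [← hcj, ← hc2, add_comm]; exact hsum.symm
    have hKb := hpair (b+1) (2*m-b) j (2*m+1-j) (by omega) hbj
    have hKc := hpair (c+1) (2*m-c) (2*m+1-j) j (by omega) hcc
    rw [hbsum] at hKb
    rw [hswap] at hKc
    have hai0 : a ^ i ≠ 0 := pow_ne_zero _ ha0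
    have hbc : b ≠ c := by
      intro h
      have hneg : a ^ ((b+1) + m) = -a ^ (b+1) := by rw [pow_add, ham, mul_neg_one]
      have hz2 : a ^ (b+1) + a ^ (2*m-b) = 0 := by
        rw [show 2*m - b = (b+1) + m by omega, hneg]; ring
      rw [hz2] at hKb
      rcases hKb with h' | h'
      · exact hai0 h'.symm
      · exact hai0 (neg_eq_zero.mp h'.symm)
    have hfin : ∀ k : ℕ, k ≤ 2*m →
        (a^(k+1) + a^(2*m-k) = a^i ∨ a^(k+1) + a^(2*m-k) = -(a^i)) → k < (q-1)/4 →
        ∃ i' k', i' < q - 1 ∧ k' < (q-1)/4 ∧ a ^ i' = a ^ (k'+1) + a^(q-1-k') ∧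
          i % m = i' % m := by
      intro k hk2m hK hk4
      rcases hK with h | h
      · refine ⟨i % (2*m), k, ?_, hk4, ?_, ?_⟩
        · rw [e2]; exact Nat.mod_lt _ (by omega)
        · rw [show q-1-k = 2*m-k by omega, h]
          exact hmodpow i
        · exact (Nat.mod_mod_of_dvd i ⟨2, by ring⟩).symm
      · refine ⟨(i + m) % (2*m), k, ?_, hk4, ?_, ?_⟩
        · rw [e2]; exact Nat.mod_lt _ (by omega)
        · rw [show q-1-k = 2*m-k by omega, h]
          rw [hmodpow (i+m), pow_add, ham]; ring
        · rw [Nat.mod_mod_of_dvd _ ⟨2, by ring⟩, Nat.add_mod_right]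
    rcases le_total b c with h | h
    · exact hfin b (by omega) hKb (by omega)
    · exact hfin c (by omega) hKc (by omega)
end

section
/- Let q be an even prime power. Then for every integer 0 ≤ j < q-1, one has the factorization into irreducible polynomials over F_q: x^{q+1} + α^{2j+1} = (x + (α^{2j+1})^{1/2}) · ∏_{i ∈ I} (x^2 + α^{i+j} x + α^{2j+1}), where (α^{2j+1})^{1/2} denotes the unique square root of α^{2j+1} in F_q. -/
open Polynomial

/-- For `q` even: `R = {0 ≤ i < q-1 : α^i = α^(k+1) + α^(q-1-k) for some 0 ≤ k < q/2 - 1}`. -/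
def Rset (q : ℕ) {F : Type} [Field F] (α : F) : Set ℕ :=
  {i | i < q - 1 ∧ ∃ k : ℕ, k < q / 2 - 1 ∧ α ^ i = α ^ (k + 1) + α ^ (q - 1 - k)}

/-- For `q` even: `I = {0,1,...,q-2} \ R`. -/
def Iset (q : ℕ) {F : Type} [Field F] (α : F) : Set ℕ :=
  {i | i < q - 1} \ Rset q α

/-- `I` as a finite set of naturals. -/
noncomputable def Ifin (q : ℕ) {F : Type} [Field F] (α : F) : Finset ℕ :=
  @Finset.filter _ (· ∈ Iset q α) (Classical.decPred _) (Finset.range (q - 1))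

/-!
In characteristic `2` (forced by `q` even) the quadratic `X ^ 2 + t X + c` with `c ≠ 0` is
reducible iff `t = u + c / u` for some `u ≠ 0`. Rescaling by `α ^ j`, the factor indexed by `i`
is irreducible iff `α ^ i = u + α / u` has no solution, i.e. iff `i ∉ R`. The Frobenius
`x ↦ x ^ q` swaps the two roots of an irreducible quadratic, whose product is `c`, so every such
quadratic divides `X ^ (q + 1) - c = X ^ (q + 1) + c`, and so does `X + ρ`. Finally
`u ↦ u + c / u` is two-to-one on `u ∉ {0, ρ}` and misses `0` there, so exactly `q / 2` values of
`t` give irreducible quadratics: the degrees add up to `q + 1` and the distinct monic irreducible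
factors multiply to `X ^ (q + 1) + c`.
-/

open Finset

namespace Polynomial

variable {K : Type*} [Field K]

theorem monic_X_sq_add_C_mul_X_add_C (t c : K) : (X ^ 2 + C t * X + C c).Monic := by
  monicity!

theorem natDegree_X_sq_add_C_mul_X_add_C (t c : K) : (X ^ 2 + C t * X + C c).natDegree = 2 := by
  compute_degree!

theorem coeff_one_X_sq_add_C_mul_X_add_C (t c : K) : (X ^ 2 + C t * X + C c).coeff 1 = t := by
  simp [coeff_X_pow]

theorem not_irreducible_X_sq_add_C_mul_X_add_C_iff {t c : K} :
    ¬ Irreducible (X ^ 2 + C t * X + C c) ↔ ∃ x y, x * y = c ∧ x + y = t := by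
  rw [(monic_X_sq_add_C_mul_X_add_C t c).not_irreducible_iff_exists_add_mul_eq_coeff
    (natDegree_X_sq_add_C_mul_X_add_C t c)]
  simp [coeff_X_pow, eq_comm]

theorem isCoprime_of_monic_of_irreducible_of_ne {p q : K[X]} (hp : p.Monic) (hq : q.Monic)
    (hp' : Irreducible p) (hq' : Irreducible q) (hne : p ≠ q) : IsCoprime p q :=
  hp'.coprime_iff_not_dvd.mpr fun h =>
    hne (eq_of_monic_of_associated hp hq (hp'.associated_of_dvd hq' h))

theorem eq_mul_prod_of_monic_of_irreducible_of_dvd {ι : Type*} {s : Finset ι} {p f : K[X]}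
    {g : ι → K[X]} (hf : f.Monic) (hp : p.Monic) (hp' : Irreducible p)
    (hg : ∀ i ∈ s, (g i).Monic) (hg' : ∀ i ∈ s, Irreducible (g i)) (hinj : Set.InjOn g s)
    (hpg : ∀ i ∈ s, p ≠ g i) (hpf : p ∣ f) (hgf : ∀ i ∈ s, g i ∣ f)
    (hdeg : f.natDegree ≤ p.natDegree + ∑ i ∈ s, (g i).natDegree) :
    f = p * ∏ i ∈ s, g i := by
  have hcop : IsCoprime p (∏ i ∈ s, g i) := IsCoprime.prod_right fun i hi =>
    isCoprime_of_monic_of_irreducible_of_ne hp (hg i hi) hp' (hg' i hi) (hpg i hi)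
  have hprod : ∏ i ∈ s, g i ∣ f := prod_dvd_of_coprime (fun i hi i' hi' hne =>
    isCoprime_of_monic_of_irreducible_of_ne (hg i hi) (hg i' hi') (hg' i hi) (hg' i' hi')
      fun h => hne (hinj hi hi' h)) hgf
  have hmonic : (∏ i ∈ s, g i).Monic := monic_prod_of_monic _ _ hg
  refine eq_of_monic_of_dvd_of_natDegree_le (hp.mul hmonic) hf (hcop.mul_dvd hpf hprod) ?_
  rwa [hp.natDegree_mul hmonic, natDegree_prod_of_monic _ _ hg]

theorem X_add_C_ne_X_sq_add_C_mul_X_add_C (a t c : K) : X + C a ≠ X ^ 2 + C t * X + C c :=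
  fun h => by
    have := congrArg natDegree h
    rw [natDegree_X_add_C, natDegree_X_sq_add_C_mul_X_add_C] at this
    exact absurd this (by decide)

theorem X_add_C_dvd_X_pow_card_add_one_add_C [Fintype K] [CharP K 2] {c ρ : K}
    (hρ : ρ ^ 2 = c) : X + C ρ ∣ X ^ (Fintype.card K + 1) + C c := by
  rw [← CharTwo.sub_eq_add X, dvd_iff_isRoot, IsRoot, eval_add, eval_pow, eval_X, eval_C,
    pow_succ, FiniteField.pow_card, ← sq, hρ, CharTwo.add_self_eq_zero]

theorem splits_X_pow_card_sub_X [Fintype K] : (X ^ Fintype.card K - X : K[X]).Splits := by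
  rw [splits_iff_card_roots, FiniteField.roots_X_pow_card_sub_X,
    FiniteField.X_pow_card_sub_X_natDegree_eq K Fintype.one_lt_card]
  rfl

theorem Irreducible.X_sq_add_C_mul_X_add_C_dvd [Fintype K] {t c : K}
    (h : Irreducible (X ^ 2 + C t * X + C c)) :
    X ^ 2 + C t * X + C c ∣ X ^ (Fintype.card K + 1) - C c := by
  set p := X ^ 2 + C t * X + C c
  have := Fact.mk h
  set r := AdjoinRoot.root p
  set σ := FiniteField.frobeniusAlgHom K (AdjoinRoot p)
  have hdvd : ∀ f : K[X], p ∣ f ↔ aeval r f = 0 := fun f => by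
    rw [AdjoinRoot.aeval_eq, AdjoinRoot.mk_eq_zero]
  have hr : aeval r p = 0 := (hdvd p).mp dvd_rfl
  have hσr : aeval (σ r) p = 0 := by rw [aeval_algHom_apply, hr, map_zero]
  have hσ : σ r ≠ r := by
    intro hfix
    have : p ∣ X ^ Fintype.card K - X := by
      rw [hdvd, map_sub, map_pow, aeval_X, sub_eq_zero]
      exact hfix
    have := (splits_X_pow_card_sub_X.of_dvd (FiniteField.X_pow_card_sub_X_ne_zero K
      Fintype.one_lt_card) this).natDegree_eq_one_of_irreducible h
    rw [natDegree_X_sq_add_C_mul_X_add_C] at this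
    exact absurd this (by decide)
  simp only [p, map_add, map_pow, map_mul, aeval_X, aeval_C] at hr hσr
  have hσr' : σ r = -r - algebraMap K _ t := by
    have : (σ r - r) * (σ r + r + algebraMap K _ t) = 0 := by linear_combination hσr - hr
    linear_combination (mul_eq_zero.mp this).resolve_left (sub_ne_zero.mpr hσ)
  rw [hdvd, map_sub, map_pow, aeval_X, aeval_C, pow_succ, show r ^ Fintype.card K = σ r from rfl,
    hσr']
  linear_combination -hr

end Polynomial

theorem exists_mul_eq_and_add_eq_scale_iff {K : Type*} [Field K] {l c t : K} (hl : l ≠ 0) :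
    (∃ x y, x * y = l ^ 2 * c ∧ x + y = l * t) ↔ ∃ x y, x * y = c ∧ x + y = t := by
  constructor
  · rintro ⟨x, y, hxy, hsum⟩
    refine ⟨x / l, y / l, ?_, ?_⟩
    · field_simp; linear_combination hxy
    · field_simp; linear_combination hsum
  · rintro ⟨x, y, rfl, rfl⟩
    exact ⟨l * x, l * y, by ring, by ring⟩

theorem add_div_eq_add_div_iff {K : Type*} [Field K] {c u v : K} (hu : u ≠ 0) (hv : v ≠ 0) :
    u + c / u = v + c / v ↔ v = u ∨ v = c / u := by
  rw [eq_div_iff hu]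
  constructor
  · intro h
    have : (v - u) * (v * u - c) = 0 := by
      field_simp at h
      linear_combination -h
    rcases mul_eq_zero.mp this with h | h
    · exact .inl (sub_eq_zero.mp h)
    · exact .inr (sub_eq_zero.mp h)
  · rintro (rfl | h)
    · rfl
    · field_simp
      rw [← h]; ring

section CharTwo

variable {K : Type*} [Field K] [CharP K 2]

theorem div_ne_self_of_sq_eq {c ρ u : K} (hρ : ρ ^ 2 = c) (hu0 : u ≠ 0) (huρ : u ≠ ρ) :
    c / u ≠ u := fun h => huρ <| CharTwo.sq_inj.mp <| by
  rw [hρ, sq]; nth_rw 2 [← h]; field_simp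

variable [Fintype K]

theorem two_mul_card_image_add_div [DecidableEq K] {c ρ : K} (hρ : ρ ^ 2 = c) (hρ0 : ρ ≠ 0) :
    2 * #(({0, ρ}ᶜ : Finset K).image fun u => u + c / u) = Fintype.card K - 2 := by
  have hfiber : ∀ t ∈ ({0, ρ}ᶜ : Finset K).image (fun u => u + c / u),
      #{u ∈ ({0, ρ}ᶜ : Finset K) | u + c / u = t} = 2 := by
    simp only [mem_image, mem_compl, mem_insert, mem_singleton, not_or]
    rintro _ ⟨u, ⟨hu0, huρ⟩, rfl⟩
    have hc0 : c ≠ 0 := by rw [← hρ]; exact pow_ne_zero 2 hρ0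
    rw [← card_pair (div_ne_self_of_sq_eq hρ hu0 huρ)]
    congr 1
    ext v
    simp only [mem_filter, mem_compl, mem_insert, mem_singleton, not_or]
    constructor
    · rintro ⟨⟨hv0, -⟩, hv⟩
      exact ((add_div_eq_add_div_iff hu0 hv0).mp hv.symm).symm
    · rintro (rfl | rfl)
      · refine ⟨⟨div_ne_zero hc0 hu0, fun h => huρ ?_⟩, by field_simp; ring⟩
        refine mul_left_cancel₀ hρ0 ?_
        rw [← sq, hρ, ← h, div_mul_cancel₀ _ hu0]
      · exact ⟨⟨hu0, huρ⟩, rfl⟩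
  have := card_eq_sum_card_image (fun u => u + c / u) ({0, ρ}ᶜ : Finset K)
  rw [sum_congr rfl hfiber, sum_const, smul_eq_mul, card_compl, card_pair hρ0.symm] at this
  omega

theorem not_irreducible_X_sq_add_C_zero_mul_X_add_C (c : K) :
    ¬ Irreducible (X ^ 2 + C 0 * X + C c) := by
  obtain ⟨ρ, hρ⟩ := FiniteField.isSquare_of_char_two (ringChar.eq K 2) c
  exact not_irreducible_X_sq_add_C_mul_X_add_C_iff.mpr
    ⟨ρ, ρ, hρ.symm, CharTwo.add_self_eq_zero ρ⟩

open scoped Classical in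
theorem card_filter_irreducible_X_sq_add_C_mul_X_add_C {c : K} (hc : c ≠ 0) :
    #{t | Irreducible (X ^ 2 + C t * X + C c)} = Fintype.card K / 2 := by
  obtain ⟨ρ, hρ⟩ := FiniteField.isSquare_of_char_two (ringChar.eq K 2) c
  rw [← sq, eq_comm] at hρ
  have hρ0 : ρ ≠ 0 := by rintro rfl; simp [← hρ] at hc
  have hred : ({t | ¬ Irreducible (X ^ 2 + C t * X + C c)} : Finset K) =
      insert 0 (({0, ρ}ᶜ : Finset K).image fun u => u + c / u) := by
    ext t
    simp only [mem_filter, mem_univ, true_and, not_irreducible_X_sq_add_C_mul_X_add_C_iff,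
      mem_insert, mem_image, mem_compl, mem_insert, mem_singleton, not_or]
    constructor
    · rintro ⟨x, y, rfl, rfl⟩
      have hx0 : x ≠ 0 := left_ne_zero_of_mul hc
      by_cases hxρ : x = ρ
      · subst hxρ
        have : y = x := mul_left_cancel₀ hx0 (by rw [← sq, hρ])
        rw [this, CharTwo.add_self_eq_zero]
        exact .inl rfl
      · exact .inr ⟨x, ⟨hx0, hxρ⟩, by rw [mul_div_cancel_left₀ y hx0]⟩
    · rintro (rfl | ⟨u, ⟨hu0, -⟩, rfl⟩)
      · exact not_irreducible_X_sq_add_C_mul_X_add_C_iff.mp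
          (not_irreducible_X_sq_add_C_zero_mul_X_add_C c)
      · exact ⟨u, c / u, mul_div_cancel₀ c hu0, rfl⟩
  have h0 : 0 ∉ ({0, ρ}ᶜ : Finset K).image fun u => u + c / u := by
    simp only [mem_image, mem_compl, mem_insert, mem_singleton, not_or, CharTwo.add_eq_zero]
    rintro ⟨u, ⟨hu0, huρ⟩, h⟩
    exact div_ne_self_of_sq_eq hρ hu0 huρ h.symm
  have hsum := card_filter_add_card_filter_not (s := univ) fun t : K =>
    Irreducible (X ^ 2 + C t * X + C c)
  rw [hred, card_insert_of_notMem h0, card_univ] at hsum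
  have := two_mul_card_image_add_div hρ hρ0
  have := FiniteField.even_card_of_char_two (ringChar.eq K 2)
  have : 2 ≤ Fintype.card K := Fintype.one_lt_card
  omega

end CharTwo

theorem mem_Ifin {q : ℕ} {F : Type} [Field F] {α : F} {i : ℕ} :
    i ∈ Ifin q α ↔ i < q - 1 ∧ i ∉ Rset q α := by
  classical
  rw [Ifin, mem_filter, mem_range, Iset, Set.mem_sdiff]
  exact and_congr_right fun hi => and_iff_right hi

section Generator

variable {F : Type*} [Field F] [Fintype F] {α : Fˣ}

theorem orderOf_eq_card_sub_one_of_forall_mem_zpowers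
    (hα : ∀ x : Fˣ, x ∈ Subgroup.zpowers α) : orderOf α = Fintype.card F - 1 := by
  rw [orderOf_eq_card_of_forall_mem_zpowers hα, Nat.card_units, Nat.card_eq_fintype_card]

theorem exists_pow_eq_of_forall_mem_zpowers (hα : ∀ x : Fˣ, x ∈ Subgroup.zpowers α) {x : F}
    (hx : x ≠ 0) : ∃ n < Fintype.card F - 1, (α : F) ^ n = x := by
  classical
  obtain ⟨n, hn, hpow⟩ :=
    mem_image.mp (mem_zpowers_iff_mem_range_orderOf.mp (hα (Units.mk0 x hx)))
  rw [orderOf_eq_card_sub_one_of_forall_mem_zpowers hα, mem_range] at hn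
  exact ⟨n, hn, by simpa using congrArg Units.val hpow⟩

theorem pow_add_injOn_of_forall_mem_zpowers (hα : ∀ x : Fˣ, x ∈ Subgroup.zpowers α) (j : ℕ) :
    Set.InjOn (fun n => (α : F) ^ (n + j)) (Set.Iio (Fintype.card F - 1)) := by
  intro m hm n hn h
  simp only [pow_add] at h
  rw [Set.mem_Iio, ← orderOf_eq_card_sub_one_of_forall_mem_zpowers hα] at hm hn
  exact pow_injOn_Iio_orderOf hm hn
    (Units.ext (by simpa using mul_right_cancel₀ (pow_ne_zero j α.ne_zero) h))

end Generator

section Rset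

variable {F : Type} [Field F] [Fintype F] [CharP F 2] {α : Fˣ}

theorem mem_Rset_iff (hα : ∀ x : Fˣ, x ∈ Subgroup.zpowers α) {i : ℕ} :
    i ∈ Rset (Fintype.card F) (α : F) ↔
      i < Fintype.card F - 1 ∧ ∃ x y, x * y = (α : F) ∧ x + y = (α : F) ^ i := by
  set q := Fintype.card F
  have hq : q % 2 = 0 := FiniteField.even_card_of_char_two (ringChar.eq F 2)
  have hαq : (α : F) ^ q = α := FiniteField.pow_card _
  constructor
  · rintro ⟨hi, k, hk, h⟩
    refine ⟨hi, _, _, ?_, h.symm⟩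
    rw [← pow_add, show k + 1 + (q - 1 - k) = q by omega, hαq]
  rintro ⟨hi, x, y, hxy, hsum⟩
  -- with `x = α ^ m` and `y = α ^ (q - m)`, the smaller of the two exponents is `k + 1`
  have mem_of_lt : ∀ m, 1 ≤ m → 2 * m < q → (α : F) ^ i = α ^ m + α ^ (q - m) →
      i ∈ Rset q (α : F) := fun m h1 h2 h =>
    ⟨hi, m - 1, by omega, by
      rw [h, show m - 1 + 1 = m by omega, show q - 1 - (m - 1) = q - m by omega]⟩
  have hx0 : x ≠ 0 := left_ne_zero_of_mul (hxy ▸ α.ne_zero)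
  obtain ⟨n, hn, hpow⟩ := exists_pow_eq_of_forall_mem_zpowers hα (div_ne_zero hx0 α.ne_zero)
  have hx : x = (α : F) ^ (n + 1) := by rw [pow_succ, hpow, div_mul_cancel₀ x α.ne_zero]
  have hy : y = (α : F) ^ (q - (n + 1)) := by
    refine mul_left_cancel₀ hx0 ?_
    rw [hxy, hx, ← pow_add, show n + 1 + (q - (n + 1)) = q by omega, hαq]
  rw [hx, hy] at hsum
  rcases lt_trichotomy (2 * (n + 1)) q with h | h | h
  · exact mem_of_lt (n + 1) (by omega) h hsum.symm
  · rw [show q - (n + 1) = n + 1 by omega, CharTwo.add_self_eq_zero] at hsum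
    exact absurd hsum.symm (pow_ne_zero i α.ne_zero)
  · refine mem_of_lt (q - (n + 1)) (by omega) (by omega) ?_
    rw [show q - (q - (n + 1)) = n + 1 by omega, ← hsum, add_comm]

theorem mem_Ifin_iff (hα : ∀ x : Fˣ, x ∈ Subgroup.zpowers α) {i : ℕ} (j : ℕ) :
    i ∈ Ifin (Fintype.card F) (α : F) ↔ i < Fintype.card F - 1 ∧
      Irreducible (X ^ 2 + C ((α : F) ^ (i + j)) * X + C ((α : F) ^ (2 * j + 1))) := by
  have hscale := exists_mul_eq_and_add_eq_scale_iff (c := (α : F)) (t := (α : F) ^ i)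
    (pow_ne_zero j α.ne_zero)
  rw [← pow_mul', ← pow_succ, ← pow_add, add_comm j i] at hscale
  rw [← not_not (a := Irreducible _), not_irreducible_X_sq_add_C_mul_X_add_C_iff, hscale,
    mem_Ifin, mem_Rset_iff hα]
  exact and_congr_right fun hi => by rw [and_iff_right hi]

theorem card_Ifin (hα : ∀ x : Fˣ, x ∈ Subgroup.zpowers α) (j : ℕ) :
    #(Ifin (Fintype.card F) (α : F)) = Fintype.card F / 2 := by
  classical
  rw [← card_filter_irreducible_X_sq_add_C_mul_X_add_C (pow_ne_zero (2 * j + 1) α.ne_zero)]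
  refine card_nbij (fun i => (α : F) ^ (i + j)) ?_ ?_ ?_
  · intro i hi
    simpa using ((mem_Ifin_iff hα j).mp hi).2
  · exact fun i hi i' hi' => pow_add_injOn_of_forall_mem_zpowers hα j
      ((mem_Ifin_iff hα j).mp hi).1 ((mem_Ifin_iff hα j).mp hi').1
  · intro t ht
    simp only [coe_filter, mem_univ, true_and, Set.mem_ofPred_eq] at ht
    have ht0 : t ≠ 0 := by
      rintro rfl
      exact not_irreducible_X_sq_add_C_zero_mul_X_add_C _ ht
    obtain ⟨n, hn, hpow⟩ := exists_pow_eq_of_forall_mem_zpowers hα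
      (div_ne_zero ht0 (pow_ne_zero j α.ne_zero))
    have : (α : F) ^ (n + j) = t := by
      rw [pow_add, hpow, div_mul_cancel₀ _ (pow_ne_zero j α.ne_zero)]
    refine ⟨n, (mem_Ifin_iff hα j).mpr ⟨hn, this ▸ ht⟩, this⟩

end Rset

theorem stmt_5_general (q : ℕ) (F : Type) [Field F] [Fintype F] (hF : Fintype.card F = q)
    (hq : Even q) (α : Fˣ) (hα : ∀ x : Fˣ, x ∈ Subgroup.zpowers α)
    (j : ℕ)
    (ρ : F) (hρ : ρ ^ 2 = (α : F) ^ (2 * j + 1)) :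
    (X ^ (q + 1) + C ((α : F) ^ (2 * j + 1)) : F[X]) =
      (X + C ρ) *
        ∏ i ∈ Ifin q (α : F),
          (X ^ 2 + C ((α : F) ^ (i + j)) * X + C ((α : F) ^ (2 * j + 1))) ∧
    Irreducible (X + C ρ : F[X]) ∧
    ∀ i ∈ Ifin q (α : F),
      Irreducible (X ^ 2 + C ((α : F) ^ (i + j)) * X + C ((α : F) ^ (2 * j + 1)) : F[X]) := by
  subst hF
  have := ringChar.of_eq (FiniteField.even_card_iff_char_two.mpr (Nat.even_iff.mp hq))
  have hQ : ∀ i ∈ Ifin (Fintype.card F) (α : F),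
      Irreducible (X ^ 2 + C ((α : F) ^ (i + j)) * X + C ((α : F) ^ (2 * j + 1))) :=
    fun i hi => ((mem_Ifin_iff hα j).mp hi).2
  have hlin : Irreducible (X + C ρ) := irreducible_of_degree_eq_one (degree_X_add_C ρ)
  refine ⟨eq_mul_prod_of_monic_of_irreducible_of_dvd (monic_X_pow_add_C _ (Nat.succ_ne_zero _))
    (monic_X_add_C ρ) hlin (fun _ _ => monic_X_sq_add_C_mul_X_add_C _ _) hQ ?_
    (fun _ _ => X_add_C_ne_X_sq_add_C_mul_X_add_C _ _ _)
    (X_add_C_dvd_X_pow_card_add_one_add_C hρ)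
    (fun i hi => CharTwo.sub_eq_add (X ^ (Fintype.card F + 1) : F[X]) _ ▸
      (hQ i hi).X_sq_add_C_mul_X_add_C_dvd) ?_, hlin, hQ⟩
  · intro i hi i' hi' h
    have h1 := congrArg (coeff · 1) h
    simp only [coeff_one_X_sq_add_C_mul_X_add_C] at h1
    exact pow_add_injOn_of_forall_mem_zpowers hα j ((mem_Ifin_iff hα j).mp hi).1
      ((mem_Ifin_iff hα j).mp hi').1 h1
  · simp only [natDegree_X_pow_add_C, natDegree_X_add_C, natDegree_X_sq_add_C_mul_X_add_C,
      sum_const, smul_eq_mul, card_Ifin hα j]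
    have := Nat.even_iff.mp hq
    omega

theorem stmt_5 (q : ℕ) (F : Type) [Field F] [Fintype F] (hF : Fintype.card F = q)
    (hq : Even q) (α : Fˣ) (hα : ∀ x : Fˣ, x ∈ Subgroup.zpowers α)
    (j : ℕ) (hj : j < q - 1)
    (ρ : F) (hρ : ρ ^ 2 = (α : F) ^ (2 * j + 1)) :
    (X ^ (q + 1) + C ((α : F) ^ (2 * j + 1)) : F[X]) =
      (X + C ρ) *
        ∏ i ∈ Ifin q (α : F),
          (X ^ 2 + C ((α : F) ^ (i + j)) * X + C ((α : F) ^ (2 * j + 1))) ∧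
    Irreducible (X + C ρ : F[X]) ∧
    ∀ i ∈ Ifin q (α : F),
      Irreducible (X ^ 2 + C ((α : F) ^ (i + j)) * X + C ((α : F) ^ (2 * j + 1)) : F[X]) :=
  stmt_5_general q F hF hq α hα j ρ hρ
end

section
/- Let q be a prime power and let f(x) = x^2 + bx + c ∈ F_q[x] be irreducible with b ≠ 0. Then f can be written in the form f(x) = x^2 + α^{i+j} x + α^{2j+v}, where: if q is even, then v = 1, 0 ≤ j < q-1 is the unique integer with c = α^{2j+1}, and (i mod (q-1)) ∈ I; if q is odd, then v ∈ {0,1} and 0 ≤ j < (q-1)/2 are the unique values with c = α^{2j+v}, and (i mod (q-1)/2) ∈ I_v. -/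
open Polynomial

/-- If a monic quadratic has a root, it is not irreducible. -/
lemma quad_root_not_irr {F : Type} [Field F] {b c x : F}
    (hx : x ^ 2 + b * x + c = 0) : ¬ Irreducible (X ^ 2 + C b * X + C c : F[X]) := by
  intro hirr
  have hc : c = -(x ^ 2 + b * x) := by linear_combination hx
  have hfac : (X ^ 2 + C b * X + C c : F[X]) = (X - C x) * (X + C (x + b)) := by
    rw [hc]
    simp only [map_neg, map_add, map_mul, map_pow]
    ring
  rcases hirr.isUnit_or_isUnit hfac with h | h
  · exact not_isUnit_X_sub_C x h
  · have : (X + C (x + b) : F[X]) = X - C (-(x + b)) := by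
      rw [map_neg, sub_neg_eq_add]
    rw [this] at h
    exact not_isUnit_X_sub_C _ h

theorem stmt_8 (q : ℕ) (F : Type) [Field F] [Fintype F] (hF : Fintype.card F = q)
    (α : Fˣ) (hα : ∀ x : Fˣ, x ∈ Subgroup.zpowers α)
    (b c : F) (hb : b ≠ 0)
    (hirr : Irreducible (X ^ 2 + C b * X + C c : F[X])) :
    (Even q → ∃ i j : ℕ, j < q - 1 ∧ c = (α : F) ^ (2 * j + 1) ∧
      (∀ j' : ℕ, j' < q - 1 → c = (α : F) ^ (2 * j' + 1) → j' = j) ∧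
      i % (q - 1) ∈ Iset q (α : F) ∧ b = (α : F) ^ (i + j)) ∧
    (Odd q → ∃ v i j : ℕ, v ≤ 1 ∧ j < (q - 1) / 2 ∧ c = (α : F) ^ (2 * j + v) ∧
      (∀ v' j' : ℕ, v' ≤ 1 → j' < (q - 1) / 2 → c = (α : F) ^ (2 * j' + v') →
        v' = v ∧ j' = j) ∧
      i % ((q - 1) / 2) ∈ (if v = 0 then I0set q (α : F) else I1set q (α : F)) ∧
      b = (α : F) ^ (i + j)) := by
  classical
  set a : F := (α : F) with ha
  have hq2 : 2 ≤ q := by rw [← hF]; exact Fintype.one_lt_card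
  have hord : orderOf α = q - 1 := by
    rw [orderOf_eq_card_of_forall_mem_zpowers hα, Nat.card_eq_fintype_card,
      Fintype.card_units, hF]
  have hnpos : 0 < q - 1 := by omega
  have hdlog : ∀ x : Fˣ, ∃ n, n < q - 1 ∧ x = α ^ n := by
    intro x
    obtain ⟨n, hn⟩ := (mem_powers_iff_mem_zpowers).mpr (hα x)
    refine ⟨n % (q - 1), Nat.mod_lt _ hnpos, ?_⟩
    rw [← hn, ← hord, pow_mod_orderOf]
  have hpowinj : ∀ s t : ℕ, a ^ s = a ^ t → s ≡ t [MOD q - 1] := by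
    intro s t h
    have h' : (α : Fˣ) ^ s = α ^ t := Units.ext (by push_cast; exact h)
    rwa [pow_eq_pow_iff_modEq, hord] at h'
  have h1F : a ^ (q - 1) = 1 := by
    have h := congrArg Units.val (by rw [← hord]; exact pow_orderOf_eq_one α : (α : Fˣ) ^ (q - 1) = 1)
    push_cast at h
    exact h
  have hno : ∀ x : F, x ^ 2 + b * x + c ≠ 0 := fun x h => quad_root_not_irr h hirr
  have hc0 : c ≠ 0 := by
    intro h
    exact hno 0 (by rw [h]; ring)
  set cu : Fˣ := Units.mk0 c hc0 with hcu
  set bu : Fˣ := Units.mk0 b hb with hbu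
  constructor
  · -- even case
    intro hqe
    obtain ⟨s, hqs⟩ := hqe
    -- characteristic 2
    have hchar : CharP F (ringChar F) := ringChar.charP F
    obtain ⟨n, hpn, hcard⟩ := FiniteField.card F (ringChar F)
    have hp2 : ringChar F = 2 := by
      have h2q : (2 : ℕ) ∣ q := ⟨s, by omega⟩
      rw [hF] at hcard
      have : (2 : ℕ) ∣ ringChar F := Nat.Prime.dvd_of_dvd_pow (p := 2) Nat.prime_two
        (by rw [← hcard]; exact h2q)
      rcases (Nat.Prime.eq_one_or_self_of_dvd hpn 2 this) with h | h
      · omega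
      · omega
    have htwo : (2 : F) = 0 := by
      have : CharP F 2 := hp2 ▸ hchar
      exact_mod_cast CharP.cast_eq_zero F 2
    -- squaring is surjective
    have hsq : Function.Surjective (fun x : F => x * x) := by
      rw [← Finite.injective_iff_surjective]
      intro x y h
      simp only at h
      have h2 : (x - y) * (x + y) = 0 := by linear_combination h
      rcases mul_eq_zero.mp h2 with h' | h'
      · exact sub_eq_zero.mp h'
      · have hy : y + y = 0 := by linear_combination y * htwo
        linear_combination h' - hy
    obtain ⟨r, hr⟩ := hsq (c * a⁻¹)
    simp only at hr
    have hane : a ≠ 0 := Units.ne_zero α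
    have hcr : c = r * r * a := by field_simp at hr; linear_combination -hr
    have hrne : r ≠ 0 := by
      intro h
      rw [h] at hcr
      apply hc0
      rw [hcr]; ring
    obtain ⟨j, hj, hjr⟩ := hdlog (Units.mk0 r hrne)
    have hrF : r = a ^ j := by
      have := congrArg Units.val hjr
      push_cast at this
      simpa using this
    have hcj : c = a ^ (2 * j + 1) := by rw [hcr, hrF]; ring
    obtain ⟨i, hi, hiu⟩ := hdlog (bu * (α ^ j)⁻¹)
    have hbi : b = a ^ (i + j) := by
      have : bu = α ^ i * α ^ j := by
        rw [← hiu]; group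
      have h2 := congrArg Units.val this
      push_cast at h2
      rw [hbu] at h2
      simp only [Units.val_mk0] at h2
      rw [h2, ← pow_add]
    refine ⟨i, j, hj, hcj, ?_, ?_, hbi⟩
    · -- uniqueness of j
      intro j' hj' hcj'
      have heq : a ^ (2 * j' + 1) = a ^ (2 * j + 1) := by rw [← hcj, ← hcj']
      have hmod := Nat.ModEq.add_right_cancel' 1 (hpowinj _ _ heq)
      have hcop : (q - 1).gcd 2 = 1 := by
        have : Nat.Coprime 2 (q - 1) := Nat.coprime_two_left.mpr ⟨s - 1, by omega⟩
        exact Nat.coprime_comm.mp this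
      have := Nat.ModEq.cancel_left_of_coprime hcop hmod
      rwa [Nat.ModEq, Nat.mod_eq_of_lt hj', Nat.mod_eq_of_lt hj] at this
    · -- i % (q-1) ∈ Iset
      have hii : i % (q - 1) = i := Nat.mod_eq_of_lt hi
      constructor
      · show i % (q - 1) < q - 1
        exact Nat.mod_lt _ hnpos
      · rintro ⟨-, k, hk, heq⟩
        rw [hii] at heq
        set t := q - 1 - k with hts
        have hkt : k + t = q - 1 := by omega
        have h1 : a ^ (k + t) = 1 := by rw [hkt]; exact h1F
        apply hno (a ^ j * a ^ (k + 1))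
        rw [hbi, hcj]
        linear_combination a ^ (2 * j + k + 1) * heq + a ^ (2 * j + 1) * h1 +
          (a ^ (2 * j + 2 * k + 2) + a ^ (2 * j + 1)) * htwo
  · -- odd case
    intro hqo
    obtain ⟨s, hqs⟩ := hqo
    have hq3 : 3 ≤ q := by omega
    have hM : (q - 1) / 2 = s := by omega
    have hspos : 0 < s := by omega
    obtain ⟨m, hm, hmc⟩ := hdlog cu
    have hcm : c = a ^ m := by
      have := congrArg Units.val hmc
      push_cast at this
      rw [hcu] at this
      simpa using this
    have hv : m % 2 ≤ 1 := by omega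
    have hjlt : m / 2 < (q - 1) / 2 := by omega
    have hcj : c = a ^ (2 * (m / 2) + m % 2) := by
      rw [hcm]; congr 1; omega
    obtain ⟨i, hi, hiu⟩ := hdlog (bu * (α ^ (m / 2))⁻¹)
    have hbi : b = a ^ (i + m / 2) := by
      have : bu = α ^ i * α ^ (m / 2) := by rw [← hiu]; group
      have h2 := congrArg Units.val this
      push_cast at h2
      rw [hbu] at h2
      simp only [Units.val_mk0] at h2
      rw [h2, ← pow_add]
    refine ⟨m % 2, i, m / 2, hv, hjlt, hcj, ?_, ?_, hbi⟩
    · intro v' j' hv' hj' hcj'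
      have heq : a ^ (2 * j' + v') = a ^ (2 * (m / 2) + m % 2) := by rw [← hcj, ← hcj']
      have hmod := hpowinj _ _ heq
      have hlt1 : 2 * j' + v' < q - 1 := by omega
      have hlt2 : 2 * (m / 2) + m % 2 < q - 1 := by omega
      rw [Nat.ModEq, Nat.mod_eq_of_lt hlt1, Nat.mod_eq_of_lt hlt2] at hmod
      omega
    · -- membership
      set j := m / 2 with hjdef
      -- β-machinery: a^s squares to 1
      have hβ1 : a ^ s * a ^ s = 1 := by
        rw [← pow_add, show s + s = q - 1 by omega]; exact h1F
      have key : ∀ i₁ i₂ : ℕ, i₁ % s = i₂ % s →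
          a ^ i₁ = (a ^ s) ^ (i₁ / s + i₂ / s) * a ^ i₂ := by
        intro i₁ i₂ h
        have e1 : a ^ i₁ = (a ^ s) ^ (i₁ / s) * a ^ (i₁ % s) := by
          conv_lhs => rw [← Nat.div_add_mod i₁ s]
          rw [pow_add, pow_mul]
        have e2 : a ^ i₂ = (a ^ s) ^ (i₂ / s) * a ^ (i₂ % s) := by
          conv_lhs => rw [← Nat.div_add_mod i₂ s]
          rw [pow_add, pow_mul]
        rw [e1, e2, h, pow_add]
        have hββ : (a ^ s) ^ (i₂ / s) * (a ^ s) ^ (i₂ / s) = 1 := by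
          rw [← mul_pow, hβ1, one_pow]
        linear_combination (-((a ^ s) ^ (i₁ / s) * a ^ (i₂ % s))) * hββ
      have hmlt : i % ((q - 1) / 2) < (q - 1) / 2 := Nat.mod_lt _ (by omega)
      by_cases hv0 : m % 2 = 0
      · rw [if_pos hv0]
        refine ⟨hmlt, ?_⟩
        rintro ⟨i', k, hi', hk, heq, hrr⟩
        rw [hM] at hrr
        have hmain := key i i' (by rw [hrr])
        set ε := (a ^ s) ^ (i / s + i' / s) with hεdef
        have hε : ε * ε = 1 := by rw [hεdef, ← mul_pow, hβ1, one_pow]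
        set t := q - 1 - k with hts
        have hkt : k + t = q - 1 := by omega
        have h1 : a ^ (k + t) = 1 := by rw [hkt]; exact h1F
        have hfull : a ^ i = ε * (a ^ k + a ^ t) := by rw [hmain, heq]
        apply hno (-(ε * a ^ (j + k)))
        rw [hbi, hcj, hv0]
        linear_combination (-(ε * a ^ (2 * j + k))) * hfull +
          (-(a ^ (2 * j + k + t))) * hε + (-(a ^ (2 * j))) * h1
      · rw [if_neg hv0]
        refine ⟨hmlt, ?_⟩
        rintro ⟨i', k, hi', hk, heq, hrr⟩
        rw [hM] at hrr
        have hmain := key i i' (by rw [hrr])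
        set ε := (a ^ s) ^ (i / s + i' / s) with hεdef
        have hε : ε * ε = 1 := by rw [hεdef, ← mul_pow, hβ1, one_pow]
        set t := q - 1 - k with hts
        have hkt : k + 1 + t = q := by omega
        have h1 : a ^ (k + 1 + t) = a := by
          rw [show k + 1 + t = q - 1 + 1 by omega, pow_succ, h1F, one_mul]
        have hfull : a ^ i = ε * (a ^ (k + 1) + a ^ t) := by rw [hmain, heq]
        have hv1 : m % 2 = 1 := by omega
        apply hno (-(ε * a ^ (j + k + 1)))
        rw [hbi, hcj, hv1]
        linear_combination (-(ε * a ^ (2 * j + k + 1))) * hfull +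
          (-(a ^ (2 * j + k + 1 + t))) * hε + (-(a ^ (2 * j))) * h1
end

section
/- Let q be a prime power and a ∈ F_{q^2}^*. Then for every h ∈ F_q, 0 ≤ 𝒩(h, c_{q-1}(a)) ≤ 2, and there exists at least one u ∈ F_q such that 𝒩(u, c_{q-1}(a)) = 2. Moreover, if q is even then 𝒩(0, c_{q-1}(a)) = 1. -/
open Polynomial

/-- The codeword `c_N(a) = (Tr(a γ^(N k)))_{k=0}^{n-1}`, a vector of length `n` over `F`. -/
noncomputable def cwordN {F E : Type} [Field F] [Field E] [Algebra F E]
    (γ : Eˣ) (N n : ℕ) (a : E) : Fin n → F :=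
  fun k => Algebra.trace F E (a * (γ : E) ^ (N * (k : ℕ)))

/-- `𝒩(t, v)`: the number of occurrences of the symbol `t` in the vector `v`. -/
def Ncount {F : Type} [DecidableEq F] {n : ℕ} (t : F) (v : Fin n → F) : ℕ :=
  (Finset.univ.filter fun k => v k = t).card

/-!
Let `β = γ^(q-1)`, a primitive `(q+1)`-th root of unity, so the entries of `c_{q-1}(a)` are the
values `Tr(aζ) = aζ + a^q ζ^q` on the `q + 1` roots `ζ` of `X^(q+1) - 1`, each taken once. Since
`ζ^q = ζ⁻¹` there, `Tr(aζ) = t` becomes the quadratic `aζ² - tζ + a^q = 0`, so every value is taken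
at most twice, and twice at least once because `q + 1` entries lie in `F_q`. In characteristic 2 the
quadratic for `t = 0` is `a(ζ + w)²` with `w² = a^(q-1)`, and `w` is itself a `(q+1)`-th root of unity.
-/

open Finset

lemma card_filter_quadratic_eq_zero_le_two {K : Type*} [CommRing K] [IsDomain K] [DecidableEq K]
    (s : Finset K) {a : K} (ha : a ≠ 0) (b c : K) :
    #{x ∈ s | a * x ^ 2 + b * x + c = 0} ≤ 2 := by
  set P : K[X] := C a * X ^ 2 + C b * X + C c
  have hP : P.natDegree = 2 := natDegree_quadratic ha
  have hP0 : P ≠ 0 := ne_zero_of_natDegree_gt (n := 0) (by omega)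
  calc #{x ∈ s | a * x ^ 2 + b * x + c = 0} ≤ #P.roots.toFinset :=
        card_le_card fun x hx => by simpa [P, mem_roots hP0] using (mem_filter.1 hx).2
    _ ≤ P.natDegree := (Multiset.toFinset_card_le _).trans (card_roots' P)
    _ = 2 := hP

lemma exists_ncount_eq_two_of_card_lt {F : Type} [Fintype F] [DecidableEq F] {n : ℕ}
    (v : Fin n → F) (hn : Fintype.card F < n) (hv : ∀ t, Ncount t v ≤ 2) :
    ∃ u, Ncount u v = 2 := by
  obtain ⟨u, hu⟩ := Fintype.exists_lt_card_fiber_of_mul_lt_card v (n := 1) (by simpa using hn)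
  exact ⟨u, (hv u).antisymm hu⟩

lemma IsPrimitiveRoot.card_filter_fin_pow {R : Type*} [CommRing R] [IsDomain R] [DecidableEq R]
    {ζ : R} {n : ℕ} (hζ : IsPrimitiveRoot ζ n) (p : R → Prop) [DecidablePred p] :
    #{k : Fin n | p (ζ ^ (k : ℕ))} = #{x ∈ nthRootsFinset n (1 : R) | p x} := by
  obtain rfl | hn := n.eq_zero_or_pos
  · simp
  have : NeZero n := ⟨hn.ne'⟩
  refine card_bij (fun k _ => ζ ^ (k : ℕ)) (fun k hk => ?_) (fun i _ j _ hij => ?_) fun x hx => ?_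
  · refine mem_filter.2 ⟨(Polynomial.mem_nthRootsFinset hn _).2 ?_, (mem_filter.1 hk).2⟩
    rw [← pow_mul, mul_comm, pow_mul, hζ.pow_eq_one, one_pow]
  · exact Fin.ext (hζ.pow_inj i.isLt j.isLt hij)
  · rw [mem_filter, Polynomial.mem_nthRootsFinset hn] at hx
    obtain ⟨k, hk, rfl⟩ := hζ.eq_pow_of_pow_eq_one hx.1
    exact ⟨⟨k, hk⟩, by simpa using hx.2, rfl⟩

lemma ncount_cwordN_eq_card_filter {F E : Type} [Field F] [DecidableEq F] [Field E]
    [DecidableEq E] [Algebra F E] {γ : Eˣ} {N n : ℕ} (hγ : IsPrimitiveRoot ((γ : E) ^ N) n)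
    (a : E) (t : F) :
    Ncount t (cwordN γ N n a) =
      #{x ∈ nthRootsFinset n (1 : E) | Algebra.trace F E (a * x) = t} := by
  simp only [Ncount, cwordN, pow_mul]
  exact hγ.card_filter_fin_pow fun x => Algebra.trace F E (a * x) = t

lemma isPrimitiveRoot_pow_sub_one {E : Type*} [Field E] [Fintype E] {q : ℕ}
    (hE : Fintype.card E = q ^ 2) {γ : Eˣ} (hγ : ∀ x : Eˣ, x ∈ Subgroup.zpowers γ) :
    IsPrimitiveRoot ((γ : E) ^ (q - 1)) (q + 1) := by
  classical
  have hq : 1 < q := (one_lt_pow_iff two_ne_zero).1 (hE ▸ Fintype.one_lt_card)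
  have hγ' : IsPrimitiveRoot γ ((q - 1) * (q + 1)) := by
    rw [IsPrimitiveRoot.iff_orderOf, orderOf_eq_card_of_forall_mem_zpowers hγ,
      Nat.card_eq_fintype_card, Fintype.card_units, hE, mul_comm, ← sq_tsub_sq, one_pow]
  have := (IsPrimitiveRoot.coe_units_iff.2 hγ').pow_of_dvd (by omega) (dvd_mul_right _ _)
  rwa [Nat.mul_div_cancel_left _ (by omega)] at this

section QuadraticExtension

variable {F E : Type*} [Field F] [Fintype F] [Field E] [Fintype E] [Algebra F E] {q : ℕ}

lemma finrank_eq_two_of_card_eq_sq (hF : Fintype.card F = q) (hE : Fintype.card E = q ^ 2) :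
    Module.finrank F E = 2 := by
  have hq : 1 < q := hF ▸ Fintype.one_lt_card
  have := Module.card_eq_pow_finrank (K := F) (V := E)
  rw [hF, hE] at this
  exact (Nat.pow_right_injective hq this).symm

lemma algebraMap_trace_eq_add_pow (hF : Fintype.card F = q) (hE : Fintype.card E = q ^ 2)
    (x : E) : algebraMap F E (Algebra.trace F E x) = x + x ^ q := by
  rw [FiniteField.algebraMap_trace_eq_sum_pow, finrank_eq_two_of_card_eq_sq hF hE,
    Nat.card_eq_fintype_card, hF]
  simp [Finset.sum_range_succ]

lemma trace_mul_eq_iff (hF : Fintype.card F = q) (hE : Fintype.card E = q ^ 2) {ζ : E}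
    (hζ : ζ ^ (q + 1) = 1) (a : E) (t : F) :
    Algebra.trace F E (a * ζ) = t ↔ a * ζ ^ 2 - algebraMap F E t * ζ + a ^ q = 0 := by
  have hζ0 : ζ ≠ 0 := by rintro rfl; simp at hζ
  rw [← (algebraMap F E).injective.eq_iff, algebraMap_trace_eq_add_pow hF hE, ← mul_left_inj' hζ0]
  constructor
  · intro h; linear_combination h - a ^ q * hζ
  · intro h; linear_combination h + a ^ q * hζ

lemma card_filter_trace_mul_eq_le_two [DecidableEq F] [DecidableEq E] (hF : Fintype.card F = q)
    (hE : Fintype.card E = q ^ 2) {a : E} (ha : a ≠ 0) (t : F) :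
    #{x ∈ nthRootsFinset (q + 1) (1 : E) | Algebra.trace F E (a * x) = t} ≤ 2 := by
  calc #{x ∈ nthRootsFinset (q + 1) (1 : E) | Algebra.trace F E (a * x) = t}
      = #{x ∈ nthRootsFinset (q + 1) (1 : E) | a * x ^ 2 + -algebraMap F E t * x + a ^ q = 0} := by
        refine congrArg card (filter_congr fun x hx => ?_)
        rw [trace_mul_eq_iff hF hE ((mem_nthRootsFinset q.succ_pos _).1 hx), neg_mul,
          ← sub_eq_add_neg]
    _ ≤ 2 := card_filter_quadratic_eq_zero_le_two _ ha _ _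

lemma card_filter_trace_mul_eq_zero_of_even [DecidableEq F] [DecidableEq E]
    (hF : Fintype.card F = q) (hE : Fintype.card E = q ^ 2) {a : E} (ha : a ≠ 0) (hq : Even q) :
    #{x ∈ nthRootsFinset (q + 1) (1 : E) | Algebra.trace F E (a * x) = 0} = 1 := by
  have hq1 : 1 < q := hF ▸ Fintype.one_lt_card
  have hchar : ringChar E = 2 := FiniteField.even_card_iff_char_two.2 <| by
    rw [hE]; exact Nat.even_iff.1 (hq.pow_of_ne_zero two_ne_zero)
  have : CharP E 2 := ringChar.of_eq hchar
  obtain ⟨w, hw⟩ := FiniteField.isSquare_of_char_two hchar (a ^ (q - 1))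
  have hw1 : w ^ (q + 1) = 1 := by
    have hnorm : (a ^ (q - 1)) ^ (q + 1) = 1 := by
      rw [← pow_mul, mul_comm, ← sq_tsub_sq, one_pow, ← hE, FiniteField.pow_card_sub_one_eq_one a ha]
    refine CharTwo.sq_inj.1 ?_
    rw [one_pow, ← pow_mul, mul_comm, pow_mul, sq w, ← hw, hnorm]
  have hfactor : ∀ x : E, a * x ^ 2 - algebraMap F E 0 * x + a ^ q = a * (x + w) ^ 2 := by
    intro x
    rw [map_zero, zero_mul, sub_zero, CharTwo.add_sq, mul_add, sq w, ← hw, ← pow_succ',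
      Nat.sub_add_cancel hq1.le]
  calc #{x ∈ nthRootsFinset (q + 1) (1 : E) | Algebra.trace F E (a * x) = 0}
      = #{x ∈ nthRootsFinset (q + 1) (1 : E) | x = w} := by
        refine congrArg card (filter_congr fun x hx => ?_)
        rw [trace_mul_eq_iff hF hE ((mem_nthRootsFinset q.succ_pos _).1 hx), hfactor,
          mul_eq_zero, pow_eq_zero_iff two_ne_zero, CharTwo.add_eq_zero, or_iff_right ha]
    _ = 1 := by
      rw [filter_eq', if_pos ((mem_nthRootsFinset q.succ_pos _).2 hw1), card_singleton]

end QuadraticExtension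

theorem stmt_10 (q : ℕ) (F E : Type) [Field F] [Fintype F] [DecidableEq F]
    [Field E] [Fintype E] [Algebra F E]
    (hF : Fintype.card F = q) (hE : Fintype.card E = q ^ 2)
    (γ : Eˣ) (hγ : ∀ x : Eˣ, x ∈ Subgroup.zpowers γ)
    (a : E) (ha : a ≠ 0) :
    (∀ h : F, Ncount h (cwordN γ (q - 1) (q + 1) a) ≤ 2) ∧
    (∃ u : F, Ncount u (cwordN γ (q - 1) (q + 1) a) = 2) ∧
    (Even q → Ncount (0 : F) (cwordN γ (q - 1) (q + 1) a) = 1) := by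
  classical
  have hcount := ncount_cwordN_eq_card_filter (F := F) (isPrimitiveRoot_pow_sub_one hE hγ) a
  have hle : ∀ h : F, Ncount h (cwordN γ (q - 1) (q + 1) a) ≤ 2 := fun h => by
    rw [hcount]
    exact card_filter_trace_mul_eq_le_two hF hE ha h
  refine ⟨hle, exists_ncount_eq_two_of_card_lt _ (by omega) hle, fun hq => ?_⟩
  rw [hcount]
  exact card_filter_trace_mul_eq_zero_of_even hF hE ha hq
end
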